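/- arXiv:1603.08036 — 7 statements merged into one kernel-verified Lean document; each statement's English description precedes it below -/
import Mathlib

section
/- Let (X, μ) be a probability space and let f : X → X be a measure-preserving map. Then for every measurable set P ⊆ X, limsup_{m → ∞} (1/m) ∑_{n=0}^{m−1} μ(f^{-[n]}(P) ∩ P) ≥ μ(P)², where f^{-[n]}(P) denotes the preimage of P under the n-th iterate of f. -/
/-!
Write `Aₙ = f^{-[n]} P` and `gₘ = ∑_{n<m} 1_{Aₙ}`. Cauchy–Schwarz gives
`(m μ(P))² = (∫ gₘ)² ≤ ∫ gₘ² = ∑_{i,j<m} μ(Aᵢ ∩ Aⱼ)`, and since `f` preserves `μ`,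
`μ(Aᵢ ∩ Aⱼ) = μ(A_{|i-j|} ∩ P)`, so the double sum is at most `2 ∑_{j<m} S_{j+1}` with
`S_k = ∑_{n<k} μ(Aₙ ∩ P)`. If `S_k ≤ b k` for all large `k`, summing these bounds gives
`m² μ(P)² ≤ b m² + O(m)`, whence `μ(P)² ≤ b`.
-/

open MeasureTheory Filter Finset
open scoped ENNReal

lemma sq_lintegral_le_measure_univ_mul_lintegral_sq {X : Type*} [MeasurableSpace X]
    (μ : Measure X) {g : X → ℝ≥0∞} (hg : AEMeasurable g μ) :
    (∫⁻ x, g x ∂μ) ^ 2 ≤ μ Set.univ * ∫⁻ x, g x ^ 2 ∂μ := by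
  have hholder := ENNReal.lintegral_mul_le_Lp_mul_Lq μ Real.HolderConjugate.two_two hg
    (aemeasurable_const (b := (1 : ℝ≥0∞)))
  simp only [Pi.mul_apply, mul_one, ENNReal.rpow_two, one_pow, one_mul, lintegral_const]
    at hholder
  calc (∫⁻ x, g x ∂μ) ^ 2
      ≤ ((∫⁻ x, g x ^ 2 ∂μ) ^ (1 / 2 : ℝ) * μ Set.univ ^ (1 / 2 : ℝ)) ^ 2 := by gcongr
    _ = μ Set.univ * ∫⁻ x, g x ^ 2 ∂μ := by
      rw [mul_pow, ← ENNReal.rpow_two, ← ENNReal.rpow_two, ← ENNReal.rpow_mul,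
        ← ENNReal.rpow_mul]
      norm_num [mul_comm]

lemma sum_range_sum_range_le_two_nsmul {M : Type*} [AddCommMonoid M] [PartialOrder M]
    [CanonicallyOrderedAdd M] [IsOrderedAddMonoid M] (F : ℕ → ℕ → M) (T : ℕ → M)
    (hF : ∀ i j, i ≤ j → F i j = T (j - i)) (hF_symm : ∀ i j, F i j = F j i) (m : ℕ) :
    ∑ i ∈ range m, ∑ j ∈ range m, F i j ≤ 2 • ∑ j ∈ range m, ∑ n ∈ range (j + 1), T n := by
  let D : ℕ → ℕ → M := fun i j => if i ≤ j then T (j - i) else 0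
  have hFD : ∀ i j, F i j ≤ D i j + D j i := by
    intro i j
    rcases le_total i j with h | h
    · simp only [D, if_pos h, ← hF i j h]; exact le_self_add
    · simp only [D, if_pos h, hF_symm i j, ← hF j i h]; exact le_add_self
  have hD : ∀ j < m, ∑ i ∈ range m, D i j = ∑ n ∈ range (j + 1), T n := by
    intro j hj
    rw [← sum_subset (range_subset_range.2 hj) fun i _ hi => if_neg (by simpa using hi),
      ← sum_range_reflect]
    refine sum_congr rfl fun i hi => ?_
    have hi := mem_range.1 hi
    exact (if_pos (by omega)).trans (congrArg T (by omega))
  calc ∑ i ∈ range m, ∑ j ∈ range m, F i j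
      ≤ ∑ i ∈ range m, ∑ j ∈ range m, (D i j + D j i) := by gcongr with i _ j _; exact hFD i j
    _ = 2 • ∑ j ∈ range m, ∑ i ∈ range m, D i j := by
      rw [two_nsmul]; simp only [sum_add_distrib]; rw [sum_comm (f := fun i j => D i j)]
    _ = 2 • ∑ j ∈ range m, ∑ n ∈ range (j + 1), T n := by
      rw [sum_congr rfl fun j hj => hD j (mem_range.1 hj)]

lemma lintegral_sq_sum_indicator_one {X ι : Type*} [MeasurableSpace X] (μ : Measure X)
    {A : ι → Set X} (hA : ∀ i, MeasurableSet (A i)) (s : Finset ι) :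
    ∫⁻ x, (∑ i ∈ s, (A i).indicator 1 x) ^ 2 ∂μ = ∑ i ∈ s, ∑ j ∈ s, μ (A i ∩ A j) := by
  have hsq : ∀ x, (∑ i ∈ s, (A i).indicator 1 x) ^ 2
      = ∑ i ∈ s, ∑ j ∈ s, (A i ∩ A j).indicator (1 : X → ℝ≥0∞) x := fun x => by
    simp only [sq, sum_mul_sum, Set.inter_indicator_one, Pi.mul_apply]
  simp_rw [hsq]
  rw [lintegral_finsetSum _ fun i _ => Finset.measurable_sum _ fun j _ =>
    measurable_one.indicator ((hA i).inter (hA j))]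
  refine sum_congr rfl fun i _ => ?_
  rw [lintegral_finsetSum _ fun j _ => measurable_one.indicator ((hA i).inter (hA j))]
  exact sum_congr rfl fun j _ => lintegral_indicator_one ((hA i).inter (hA j))

lemma MeasureTheory.MeasurePreserving.measure_iterate_preimage_inter_iterate_preimage
    {X : Type*} [MeasurableSpace X] {μ : Measure X} {f : X → X} (hf : MeasurePreserving f μ μ)
    {P : Set X} (hP : MeasurableSet P) {i j : ℕ} (hij : i ≤ j) :
    μ (f^[i] ⁻¹' P ∩ f^[j] ⁻¹' P) = μ (f^[j - i] ⁻¹' P ∩ P) := by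
  have hpre : f^[i] ⁻¹' P ∩ f^[j] ⁻¹' P = f^[i] ⁻¹' (f^[j - i] ⁻¹' P ∩ P) := by
    rw [Set.inter_comm, Set.preimage_inter, ← Set.preimage_comp, ← Function.iterate_add,
      Nat.sub_add_cancel hij]
  rw [hpre, (hf.iterate i).measure_preimage
    ((hf.iterate (j - i)).measurable hP |>.inter hP).nullMeasurableSet]

lemma ENNReal.le_of_forall_nat_mul_le_mul_add {b c C : ℝ≥0∞} (hC : C ≠ ∞)
    (h : ∀ m : ℕ, (m : ℝ≥0∞) * c ≤ m * b + C) : c ≤ b := by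
  by_contra! hbc
  obtain ⟨n, hn⟩ := ENNReal.exists_nat_mul_gt (tsub_pos_of_lt hbc).ne' hC
  rw [ENNReal.mul_sub fun _ _ => ENNReal.natCast_ne_top n] at hn
  exact (tsub_le_iff_left.2 (h n)).not_gt hn

lemma le_limsup_inv_mul_of_sq_mul_le_two_mul_sum {S : ℕ → ℝ≥0∞} {c : ℝ≥0∞}
    (hS : ∀ k, S k ≠ ∞) (h : ∀ m : ℕ, (m : ℝ≥0∞) ^ 2 * c ≤ 2 * ∑ j ∈ range m, S (j + 1)) :
    c ≤ limsup (fun m : ℕ => (m : ℝ≥0∞)⁻¹ * S m) atTop := by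
  refine le_of_forall_gt_imp_ge_of_dense fun b hb => ?_
  rcases eq_or_ne b ∞ with rfl | hb_top
  · exact le_top
  obtain ⟨N, hN⟩ := eventually_atTop.1 (eventually_lt_of_limsup_lt hb)
  set K := ∑ k ∈ range N, S k
  have hK : K ≠ ∞ := ENNReal.sum_ne_top.2 fun k _ => hS k
  have hbound : ∀ j : ℕ, S (j + 1) ≤ K + b * (j + 1) := by
    intro j
    rcases lt_or_ge (j + 1) N with hj | hj
    · exact (single_le_sum (fun _ _ => zero_le) (mem_range.2 hj)).trans le_self_add
    · have hSj := (hN _ hj).le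
      rw [ENNReal.inv_mul_le_iff (by simp) (by simp), mul_comm] at hSj
      exact (by exact_mod_cast hSj : S (j + 1) ≤ b * (j + 1)).trans le_add_self
  have hgauss : ∀ m : ℕ, 2 * ∑ j ∈ range m, ((j : ℝ≥0∞) + 1) = m * (m + 1) := by
    intro m
    induction m with
    | zero => simp
    | succ n ih => rw [sum_range_succ, mul_add, ih]; push_cast; ring
  refine ENNReal.le_of_forall_nat_mul_le_mul_add (C := 2 * K + b) (by finiteness) fun m => ?_
  rcases eq_or_ne m 0 with rfl | hm
  · simp
  refine (ENNReal.mul_le_mul_iff_right (a := m) (by simpa) (by simp)).1 ?_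
  calc (m : ℝ≥0∞) * (m * c) = m ^ 2 * c := by ring
    _ ≤ 2 * ∑ j ∈ range m, S (j + 1) := h m
    _ ≤ 2 * ∑ j ∈ range m, (K + b * (j + 1)) := by gcongr with j; exact hbound j
    _ = m * (2 * K) + b * (2 * ∑ j ∈ range m, ((j : ℝ≥0∞) + 1)) := by
      rw [sum_add_distrib, sum_const, card_range, nsmul_eq_mul, ← mul_sum]; ring
    _ = m * (m * b + (2 * K + b)) := by rw [hgauss]; ring

theorem MeasureTheory.MeasurePreserving.sq_mul_measure_le_measure_univ_mul {X : Type*}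
    [MeasurableSpace X] {μ : Measure X} {f : X → X} (hf : MeasurePreserving f μ μ)
    {P : Set X} (hP : MeasurableSet P) (m : ℕ) :
    ((m : ℝ≥0∞) * μ P) ^ 2 ≤
      μ Set.univ * (2 * ∑ j ∈ range m, ∑ n ∈ range (j + 1), μ (f^[n] ⁻¹' P ∩ P)) := by
  have hA : ∀ i, MeasurableSet (f^[i] ⁻¹' P) := fun i => (hf.iterate i).measurable hP
  have hg : Measurable fun x => ∑ i ∈ range m, (f^[i] ⁻¹' P).indicator (1 : X → ℝ≥0∞) x :=
    Finset.measurable_sum _ fun i _ => measurable_one.indicator (hA i)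
  have hg_lintegral : ∫⁻ x, ∑ i ∈ range m, (f^[i] ⁻¹' P).indicator 1 x ∂μ = m * μ P := by
    rw [lintegral_finsetSum _ fun i _ => measurable_one.indicator (hA i)]
    simp_rw [lintegral_indicator_one (hA _), (hf.iterate _).measure_preimage hP.nullMeasurableSet]
    simp
  calc ((m : ℝ≥0∞) * μ P) ^ 2
      ≤ μ Set.univ * ∫⁻ x, (∑ i ∈ range m, (f^[i] ⁻¹' P).indicator 1 x) ^ 2 ∂μ := by
        rw [← hg_lintegral]; exact sq_lintegral_le_measure_univ_mul_lintegral_sq μ hg.aemeasurable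
    _ = μ Set.univ * ∑ i ∈ range m, ∑ j ∈ range m, μ (f^[i] ⁻¹' P ∩ f^[j] ⁻¹' P) := by
        rw [lintegral_sq_sum_indicator_one μ hA]
    _ ≤ μ Set.univ * (2 * ∑ j ∈ range m, ∑ n ∈ range (j + 1), μ (f^[n] ⁻¹' P ∩ P)) := by
        gcongr
        refine (sum_range_sum_range_le_two_nsmul _ _ (fun i j hij => ?_)
          (fun i j => by rw [Set.inter_comm]) m).trans_eq (two_nsmul _ |>.trans (two_mul _).symm)
        exact hf.measure_iterate_preimage_inter_iterate_preimage hP hij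

/-- For a measure-preserving map `f` of a probability space `(X, μ)` and a measurable set `P`,
`limsup_m (1/m) ∑_{n<m} μ(f^{-[n]} P ∩ P) ≥ μ(P)²`. -/
theorem limsup_average_measure_iterate_preimage_inter_ge_sq
    {X : Type*} [MeasurableSpace X] (μ : Measure X) [IsProbabilityMeasure μ]
    (f : X → X) (hf : MeasurePreserving f μ μ) (P : Set X) (hP : MeasurableSet P) :
    μ P ^ 2 ≤
      Filter.limsup
        (fun m : ℕ => (m : ℝ≥0∞)⁻¹ * ∑ n ∈ Finset.range m, μ (f^[n] ⁻¹' P ∩ P))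
        Filter.atTop := by
  refine le_limsup_inv_mul_of_sq_mul_le_two_mul_sum (fun k => ?_) fun m => ?_
  · exact ENNReal.sum_ne_top.2 fun n _ => measure_ne_top μ _
  · simpa [mul_pow] using hf.sq_mul_measure_le_measure_univ_mul hP m
end

section
/- Let (X, μ) be a probability space, let f : X → X be a measure-preserving map, let P ⊆ X be a measurable set and let ε > 0. Then the set of natural numbers { n ∈ ℕ : μ(f^{-[n]}(P) ∩ P) ≥ μ(P)²·(1 − ε) } is infinite. -/
open MeasureTheory

/-!
If `μ(f⁻ⁿ P ∩ P) ≤ δ < μ(P)²` for all `n > K`, the sets `Aᵢ = f^{-[i(K+1)]} P`, `i < N`, all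
have measure `a = μ(P)`, and by measure preservation their pairwise intersections have measure
at most `δ`. Cauchy–Schwarz for `∑ᵢ 𝟙_{Aᵢ}` gives
`(N a)² ≤ ∑_{i,j} μ(Aᵢ ∩ Aⱼ) ≤ N a + N (N - 1) δ`, that is `N (a² - δ) ≤ a - δ`, which fails for
large `N`.
-/

open Finset in
theorem Finset.sum_sum_le_of_diag_le_of_offDiag_le {ι : Type*} [DecidableEq ι] {s : Finset ι}
    {b : ι → ι → ℝ} {a δ : ℝ} (hdiag : ∀ i ∈ s, b i i ≤ a)
    (hoff : ∀ i ∈ s, ∀ j ∈ s, i ≠ j → b i j ≤ δ) :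
    ∑ i ∈ s, ∑ j ∈ s, b i j ≤ #s * (a + (#s - 1) * δ) := by
  calc ∑ i ∈ s, ∑ j ∈ s, b i j = ∑ i ∈ s, (b i i + ∑ j ∈ s.erase i, b i j) :=
        sum_congr rfl fun i hi ↦ (add_sum_erase s _ hi).symm
    _ ≤ ∑ i ∈ s, (a + #(s.erase i) • δ) := by
        gcongr with i hi
        · exact hdiag i hi
        · exact sum_le_card_nsmul _ _ _ fun j hj ↦
            hoff i hi j (mem_of_mem_erase hj) (ne_of_mem_erase hj).symm
    _ = #s * (a + (#s - 1) * δ) := by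
        rw [sum_congr rfl fun i hi ↦ by rw [nsmul_eq_mul, cast_card_erase_of_mem hi], sum_const,
          nsmul_eq_mul]

namespace MeasureTheory

variable {X : Type*} [MeasurableSpace X] {μ : Measure X}

theorem sq_integral_le_integral_sq [IsProbabilityMeasure μ] {g : X → ℝ} (hg : MemLp g 2 μ) :
    (∫ x, g x ∂μ) ^ 2 ≤ ∫ x, g x ^ 2 ∂μ := by
  have := ProbabilityTheory.variance_eq_sub hg
  have := ProbabilityTheory.variance_nonneg g μ
  simp only [Pi.pow_apply] at *
  linarith

theorem integral_finsetSum_indicator_one [IsFiniteMeasure μ] {ι : Type*} (s : Finset ι)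
    {A : ι → Set X} (hA : ∀ i ∈ s, MeasurableSet (A i)) :
    ∫ x, ∑ i ∈ s, (A i).indicator 1 x ∂μ = ∑ i ∈ s, μ.real (A i) := by
  rw [integral_finsetSum s fun i hi ↦ (integrable_const 1).indicator (hA i hi)]
  exact Finset.sum_congr rfl fun i hi ↦ integral_indicator_one (hA i hi)

theorem sq_sum_measureReal_le_sum_sum_measureReal_inter [IsProbabilityMeasure μ] {ι : Type*}
    (s : Finset ι) {A : ι → Set X} (hA : ∀ i ∈ s, MeasurableSet (A i)) :
    (∑ i ∈ s, μ.real (A i)) ^ 2 ≤ ∑ i ∈ s, ∑ j ∈ s, μ.real (A i ∩ A j) := by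
  set g : X → ℝ := fun x ↦ ∑ i ∈ s, (A i).indicator 1 x
  have hAA : ∀ i ∈ s, ∀ j ∈ s, MeasurableSet (A i ∩ A j) := fun i hi j hj ↦
    (hA i hi).inter (hA j hj)
  have hg : MemLp g 2 μ := memLp_finsetSum s fun i hi ↦ (memLp_const 1).indicator (hA i hi)
  have hg2 : ∀ x, g x ^ 2 = ∑ i ∈ s, ∑ j ∈ s, (A i ∩ A j).indicator 1 x := fun x ↦ by
    simp only [g, sq, Finset.sum_mul_sum, Set.inter_indicator_one]
    rfl
  have hsq : ∫ x, g x ^ 2 ∂μ = ∑ i ∈ s, ∑ j ∈ s, μ.real (A i ∩ A j) := by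
    simp only [hg2]
    rw [integral_finsetSum s fun i hi ↦ integrable_finsetSum s fun j hj ↦
      (integrable_const 1).indicator (hAA i hi j hj)]
    exact Finset.sum_congr rfl fun i hi ↦ integral_finsetSum_indicator_one s (hAA i hi)
  rw [← integral_finsetSum_indicator_one s hA, ← hsq]
  exact sq_integral_le_integral_sq hg

open Finset in
theorem card_mul_sq_le_of_measureReal_inter_le [IsProbabilityMeasure μ] {ι : Type*}
    [DecidableEq ι] {s : Finset ι} (hs : s.Nonempty) {A : ι → Set X}
    (hA : ∀ i ∈ s, MeasurableSet (A i)) {a δ : ℝ} (hμA : ∀ i ∈ s, μ.real (A i) = a)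
    (hoff : ∀ i ∈ s, ∀ j ∈ s, i ≠ j → μ.real (A i ∩ A j) ≤ δ) :
    #s * a ^ 2 ≤ a + (#s - 1) * δ := by
  have hcard : (0 : ℝ) < #s := by exact_mod_cast hs.card_pos
  have hdiag : ∀ i ∈ s, μ.real (A i ∩ A i) ≤ a := fun i hi ↦ by
    rw [Set.inter_self, hμA i hi]
  have key : (#s * a) ^ 2 ≤ #s * (a + (#s - 1) * δ) := by
    calc (#s * a) ^ 2 = (∑ i ∈ s, μ.real (A i)) ^ 2 := by
          rw [sum_congr rfl hμA, sum_const, nsmul_eq_mul]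
      _ ≤ ∑ i ∈ s, ∑ j ∈ s, μ.real (A i ∩ A j) :=
          sq_sum_measureReal_le_sum_sum_measureReal_inter s hA
      _ ≤ #s * (a + (#s - 1) * δ) := sum_sum_le_of_diag_le_of_offDiag_le hdiag hoff
  rw [mul_pow, sq (#s : ℝ), mul_assoc] at key
  exact le_of_mul_le_mul_left key hcard

namespace MeasurePreserving

variable {f : X → X}

theorem measureReal_iterate_preimage_inter_iterate_add_preimage (hf : MeasurePreserving f μ μ)
    {s t : Set X} (hs : MeasurableSet s) (ht : MeasurableSet t) (m k : ℕ) :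
    μ.real (f^[m] ⁻¹' s ∩ f^[m + k] ⁻¹' t) = μ.real (s ∩ f^[k] ⁻¹' t) := by
  rw [add_comm, Function.iterate_add, Set.preimage_comp, ← Set.preimage_inter,
    (hf.iterate m).measureReal_preimage
      (hs.inter ((hf.iterate k).measurable ht)).nullMeasurableSet]

theorem exists_gt_lt_measureReal_iterate_preimage_inter [IsProbabilityMeasure μ]
    (hf : MeasurePreserving f μ μ) {P : Set X} (hP : MeasurableSet P) {δ : ℝ}
    (hδ : δ < μ.real P ^ 2) (K : ℕ) :
    ∃ n > K, δ < μ.real (f^[n] ⁻¹' P ∩ P) := by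
  by_contra! hK
  set a := μ.real P
  let A : ℕ → Set X := fun i ↦ f^[i * (K + 1)] ⁻¹' P
  have hA : ∀ i, MeasurableSet (A i) := fun i ↦ (hf.iterate _).measurable hP
  have hlt : ∀ i j, i < j → μ.real (A i ∩ A j) ≤ δ := by
    intro i j hij
    obtain ⟨d, rfl⟩ := Nat.exists_eq_add_of_lt hij
    simp only [A]
    rw [show (i + d + 1) * (K + 1) = i * (K + 1) + (d + 1) * (K + 1) by ring,
      hf.measureReal_iterate_preimage_inter_iterate_add_preimage hP hP, Set.inter_comm]
    exact hK _ (by nlinarith)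
  have hoff : ∀ i j, i ≠ j → μ.real (A i ∩ A j) ≤ δ := fun i j hij ↦ by
    rcases hij.lt_or_gt with h | h
    · exact hlt i j h
    · rw [Set.inter_comm]; exact hlt j i h
  obtain ⟨N, hN⟩ := exists_nat_gt ((a - δ) / (a ^ 2 - δ))
  rw [div_lt_iff₀ (by linarith)] at hN
  have hbound := card_mul_sq_le_of_measureReal_inter_le (s := Finset.range (N + 1))
    Finset.nonempty_range_add_one (fun i _ ↦ hA i)
    (fun i _ ↦ (hf.iterate _).measureReal_preimage hP.nullMeasurableSet) (fun i _ j _ ↦ hoff i j)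
  rw [Finset.card_range] at hbound
  push_cast at hbound
  linarith

end MeasurePreserving

end MeasureTheory

/-- For a measure-preserving map `f` of a probability space `(X, μ)`, a measurable set `P`
and `ε > 0`, the set `{ n : ℕ | μ(f^{-[n]} P ∩ P) ≥ μ(P)²·(1 − ε) }` is infinite. -/
theorem infinite_setOf_measure_iterate_preimage_inter_ge
    {X : Type*} [MeasurableSpace X] (μ : Measure X) [IsProbabilityMeasure μ]
    (f : X → X) (hf : MeasurePreserving f μ μ) (P : Set X) (hP : MeasurableSet P)
    (ε : ℝ) (hε : 0 < ε) :
    {n : ℕ | μ P ^ 2 * ENNReal.ofReal (1 - ε) ≤ μ (f^[n] ⁻¹' P ∩ P)}.Infinite := by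
  rcases eq_or_ne (μ P) 0 with h0 | h0
  · simpa [h0] using Set.infinite_univ
  have hδ : μ.real P ^ 2 * (1 - ε) < μ.real P ^ 2 := by
    have : 0 < μ.real P := measureReal_nonneg.lt_of_ne' ((measureReal_ne_zero_iff).mpr h0)
    have : 0 < μ.real P ^ 2 * ε := by positivity
    linarith
  refine Set.infinite_of_forall_exists_gt fun K ↦ ?_
  obtain ⟨n, hnK, hn⟩ := hf.exists_gt_lt_measureReal_iterate_preimage_inter hP hδ K
  refine ⟨n, ?_, hnK⟩
  calc μ P ^ 2 * ENNReal.ofReal (1 - ε) = ENNReal.ofReal (μ.real P ^ 2 * (1 - ε)) := by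
        rw [ENNReal.ofReal_mul (sq_nonneg _), ENNReal.ofReal_pow measureReal_nonneg,
          ofReal_measureReal]
    _ ≤ μ (f^[n] ⁻¹' P ∩ P) := by
        rw [← ofReal_measureReal]; exact ENNReal.ofReal_le_ofReal hn.le
end

section
/- Let (X, μ) be a probability space and let f : X → X be an ergodic measure-preserving map. Then for every measurable set P ⊆ X, the Cesàro averages (1/m) ∑_{n=0}^{m−1} μ(f^{-[n]}(P) ∩ P) converge to μ(P)² as m → ∞. -/
/-!
Let `U g = g ∘ f` be the Koopman operator on `L²(μ)`; then `μ(f^{-[n]} P ∩ P) = ⟪1_P, Uⁿ 1_P⟫`.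
By von Neumann's mean ergodic theorem the Cesàro averages of `Uⁿ 1_P` converge in `L²` to the
orthogonal projection of `1_P` onto the `U`-invariant functions. By ergodicity these are the
constants, so the projection is the constant `∫ 1_P = μ(P)`, and pairing with `1_P` gives `μ(P)²`.
-/

open MeasureTheory Filter Topology InnerProductSpace
open scoped ENNReal

namespace MeasureTheory

variable {α : Type*} [MeasurableSpace α] {μ : Measure α}

theorem integral_Lp_const {E : Type*} [NormedAddCommGroup E] [NormedSpace ℝ E] [CompleteSpace E]
    {p : ℝ≥0∞} [IsFiniteMeasure μ] (c : E) : ∫ x, Lp.const p μ c x ∂μ = μ.real Set.univ • c := by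
  rw [integral_congr_ae (Lp.coeFn_const _ _ _)]
  exact integral_const c

theorem L2.inner_Lp_const_left {𝕜 E : Type*} [RCLike 𝕜] [NormedAddCommGroup E]
    [InnerProductSpace 𝕜 E] [CompleteSpace E] [NormedSpace ℝ E] [IsFiniteMeasure μ]
    (c : E) (g : Lp E 2 μ) : ⟪Lp.const 2 μ c, g⟫_𝕜 = ⟪c, ∫ x, g x ∂μ⟫_𝕜 := by
  rw [← indicatorConstLp_univ, L2.inner_indicatorConstLp_eq_inner_setIntegral, setIntegral_univ]

theorem Lp.compMeasurePreserving_iterate_indicatorConstLp {E : Type*} [NormedAddCommGroup E]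
    {p : ℝ≥0∞} {f : α → α} (hf : MeasurePreserving f μ μ) {s : Set α} (hs : MeasurableSet s)
    (hμs : μ s ≠ ∞) (c : E) (n : ℕ) :
    (Lp.compMeasurePreserving f hf)^[n] (indicatorConstLp p hs hμs c) =
      indicatorConstLp p (hs.preimage (hf.measurable.iterate n))
        (by rwa [(hf.iterate n).measure_preimage hs.nullMeasurableSet]) c := by
  rw [Lp.compMeasurePreserving_iterate]
  rfl

end MeasureTheory

namespace Ergodic

variable {α : Type*} [MeasurableSpace α] {μ : Measure α} {f : α → α}

theorem exists_eq_Lp_const_of_compMeasurePreserving_eq {E : Type*} [NormedAddCommGroup E]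
    {p : ℝ≥0∞} [IsFiniteMeasure μ] (hf : Ergodic f μ) {g : Lp E p μ}
    (hg : Lp.compMeasurePreserving f hf.toMeasurePreserving g = g) : ∃ c, g = Lp.const p μ c := by
  obtain ⟨c, hc⟩ := hf.eq_const_of_compMeasurePreserving_eq (congrArg Subtype.val hg)
  exact ⟨c, Subtype.ext hc⟩

theorem tendsto_birkhoffAverage_compMeasurePreserving_Lp_two {𝕜 E : Type*} [RCLike 𝕜]
    [NormedAddCommGroup E] [InnerProductSpace 𝕜 E] [CompleteSpace E] [NormedSpace ℝ E]
    [IsProbabilityMeasure μ] (hf : Ergodic f μ) (g : Lp E 2 μ) :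
    Tendsto (birkhoffAverage 𝕜 (Lp.compMeasurePreserving f hf.toMeasurePreserving) id · g) atTop
      (𝓝 (Lp.const 2 μ (∫ x, g x ∂μ))) := by
  set U : Lp E 2 μ →L[𝕜] Lp E 2 μ :=
    (Lp.compMeasurePreservingₗᵢ 𝕜 f hf.toMeasurePreserving).toContinuousLinearMap
  set K := U.eqLocus (1 : Lp E 2 μ →L[𝕜] Lp E 2 μ)
  obtain ⟨c, hc⟩ :=
    hf.exists_eq_Lp_const_of_compMeasurePreserving_eq (K.orthogonalProjectionOnto g).2
  have hc_eq : c = ∫ x, g x ∂μ := by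
    refine ext_inner_left 𝕜 fun v => ?_
    have hv : Lp.const 2 μ v ∈ K := rfl
    have h := K.inner_orthogonalProjectionOnto_eq_of_mem_left ⟨_, hv⟩ g
    rwa [Submodule.coe_inner, hc, L2.inner_Lp_const_left, L2.inner_Lp_const_left,
      integral_Lp_const, probReal_univ, one_smul] at h
  have h := U.tendsto_birkhoffAverage_orthogonalProjection
    (LinearIsometry.norm_toContinuousLinearMap_le _) g
  rwa [hc, hc_eq] at h

theorem tendsto_average_measureReal_iterate_preimage_inter [IsProbabilityMeasure μ]
    (hf : Ergodic f μ) {s : Set α} (hs : MeasurableSet s) :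
    Tendsto (fun m : ℕ => (m : ℝ)⁻¹ * ∑ n ∈ Finset.range m, μ.real (f^[n] ⁻¹' s ∩ s)) atTop
      (𝓝 (μ.real s ^ 2)) := by
  set g : Lp ℝ 2 μ := indicatorConstLp 2 hs (measure_ne_top μ s) 1
  have h := (tendsto_const_nhds (x := g)).inner (𝕜 := ℝ)
    (hf.tendsto_birkhoffAverage_compMeasurePreserving_Lp_two (𝕜 := ℝ) g)
  convert h using 1
  · ext m
    simp only [birkhoffAverage, birkhoffSum, inner_smul_right, inner_sum, id, g,
      Lp.compMeasurePreserving_iterate_indicatorConstLp,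
      L2.inner_indicatorConstLp_one_indicatorConstLp_one, RCLike.ofReal_real_eq_id,
      Set.inter_comm s]
  · rw [real_inner_comm, L2.inner_Lp_const_left, integral_indicatorConstLp]
    simp [sq]

end Ergodic

/-- For an ergodic measure-preserving map `f` of a probability space `(X, μ)` and a measurable
set `P`, the Cesàro averages `(1/m) ∑_{n<m} μ(f^{-[n]} P ∩ P)` converge to `μ(P)²`. -/
theorem tendsto_average_measure_iterate_preimage_inter_of_ergodic
    {X : Type*} [MeasurableSpace X] (μ : Measure X) [IsProbabilityMeasure μ]
    (f : X → X) (hf : Ergodic f μ) (P : Set X) (hP : MeasurableSet P) :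
    Filter.Tendsto
      (fun m : ℕ => (m : ℝ≥0∞)⁻¹ * ∑ n ∈ Finset.range m, μ (f^[n] ⁻¹' P ∩ P))
      Filter.atTop (nhds (μ P ^ 2)) := by
  have h_ne_top : ∀ m : ℕ, (m : ℝ≥0∞)⁻¹ * ∑ n ∈ Finset.range m, μ (f^[n] ⁻¹' P ∩ P) ≠ ∞ := by
    rintro (_ | m)
    · simp
    · exact ENNReal.mul_ne_top (by simp) (ENNReal.sum_ne_top.2 fun n _ => measure_ne_top μ _)
  rw [← ENNReal.tendsto_toReal_iff h_ne_top (by finiteness)]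
  convert hf.tendsto_average_measureReal_iterate_preimage_inter hP using 2 with m
  · simp [ENNReal.toReal_sum, measureReal_def]
  · simp [measureReal_def]
end

section
/- Let X be a compact metric space, f : X → X a continuous map, and ν a Borel probability measure on X. Suppose p, q ∈ X satisfy dist(f^[n](p), f^[n](q)) → 0 as n → ∞, and the empirical measures e_n(q) := (1/n) ∑_{i=0}^{n−1} δ_{f^[i](q)} converge weakly to ν. Then the empirical measures e_n(p) := (1/n) ∑_{i=0}^{n−1} δ_{f^[i](p)} also converge weakly to ν. -/
/-!
Uniform continuity of an observable `φ` on the compact space turns asymptotic orbits into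
asymptotically equal sequences `φ (f^[n] p)`, `φ (f^[n] q)`, and Cesàro averages of two
sequences whose difference tends to zero have the same limit.
-/

open MeasureTheory Filter Topology

theorem UniformContinuous.tendsto_dist_comp {α β ι : Type*} [PseudoMetricSpace α]
    [PseudoMetricSpace β] {φ : α → β} (hφ : UniformContinuous φ) {u v : ι → α} {l : Filter ι}
    (h : Tendsto (fun i => dist (u i) (v i)) l (𝓝 0)) :
    Tendsto (fun i => dist (φ (u i)) (φ (v i))) l (𝓝 0) :=
  tendsto_uniformity_iff_dist_tendsto_zero.1 <|
    Tendsto.comp hφ (tendsto_uniformity_iff_dist_tendsto_zero (f := fun i => (u i, v i)).2 h)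

theorem Filter.Tendsto.cesaro_smul_of_dist_tendsto_zero {E : Type*} [NormedAddCommGroup E]
    [NormedSpace ℝ E] {u v : ℕ → E} {l : E}
    (hv : Tendsto (fun n : ℕ => (n⁻¹ : ℝ) • ∑ i ∈ Finset.range n, v i) atTop (𝓝 l))
    (h : Tendsto (fun n => dist (u n) (v n)) atTop (𝓝 0)) :
    Tendsto (fun n : ℕ => (n⁻¹ : ℝ) • ∑ i ∈ Finset.range n, u i) atTop (𝓝 l) := by
  have hsub : Tendsto (fun n => u n - v n) atTop (𝓝 0) :=
    tendsto_zero_iff_norm_tendsto_zero.2 (by simpa only [dist_eq_norm] using h)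
  have hsum := hv.add hsub.cesaro_smul
  rw [add_zero] at hsum
  refine hsum.congr fun n => ?_
  rw [← smul_add, ← Finset.sum_add_distrib]
  simp only [add_sub_cancel]

theorem empirical_tendsto_of_dist_iterate_tendsto_zero_general
    {X : Type*} [MetricSpace X] [CompactSpace X] [MeasurableSpace X]
    (f : X → X) (ν : Measure X)
    (p q : X)
    (hdist : Tendsto (fun n : ℕ => dist (f^[n] p) (f^[n] q)) atTop (𝓝 0))
    (hq : ∀ φ : C(X, ℝ),
      Tendsto (fun n : ℕ => (n : ℝ)⁻¹ * ∑ i ∈ Finset.range n, φ (f^[i] q)) atTop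
        (𝓝 (∫ x, φ x ∂ν))) :
    ∀ φ : C(X, ℝ),
      Tendsto (fun n : ℕ => (n : ℝ)⁻¹ * ∑ i ∈ Finset.range n, φ (f^[i] p)) atTop
        (𝓝 (∫ x, φ x ∂ν)) := fun φ =>
  (hq φ).cesaro_smul_of_dist_tendsto_zero <|
    (CompactSpace.uniformContinuous_of_continuous φ.continuous).tendsto_dist_comp hdist

/-- On a compact metric space, if the iterated orbits of `p` and `q` under a continuous map `f`
are asymptotic (`dist (f^[n] p) (f^[n] q) → 0`) and the empirical measures of `q` converge
weakly to a Borel probability measure `ν` (i.e. the Birkhoff averages of every continuous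
function converge to its `ν`-integral), then the empirical measures of `p` converge weakly
to `ν` as well. -/
theorem empirical_tendsto_of_dist_iterate_tendsto_zero
    {X : Type*} [MetricSpace X] [CompactSpace X] [MeasurableSpace X] [BorelSpace X]
    (f : X → X) (hf : Continuous f) (ν : Measure X) [IsProbabilityMeasure ν]
    (p q : X)
    (hdist : Tendsto (fun n : ℕ => dist (f^[n] p) (f^[n] q)) atTop (𝓝 0))
    (hq : ∀ φ : C(X, ℝ),
      Tendsto (fun n : ℕ => (n : ℝ)⁻¹ * ∑ i ∈ Finset.range n, φ (f^[i] q)) atTop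
        (𝓝 (∫ x, φ x ∂ν))) :
    ∀ φ : C(X, ℝ),
      Tendsto (fun n : ℕ => (n : ℝ)⁻¹ * ∑ i ∈ Finset.range n, φ (f^[i] p)) atTop
        (𝓝 (∫ x, φ x ∂ν)) :=
  empirical_tendsto_of_dist_iterate_tendsto_zero_general f ν p q hdist hq
end

section
/- Let δ, θ₀ be real numbers with 0 ≤ δ, 0 < θ₀ and θ₀ ≤ 1 − δ, let θ ∈ ℂ with |θ| ≤ θ₀, and let x, y, z ∈ ℂ satisfy |z² − x·y| ≤ δ · max(|x|, |y|, |z|)². Set X = x², Y = y², Z = x·y + θ·(z² − x·y). Then |Z² − X·Y| ≤ 2δ · max(|X|, |Y|, |Z|)². (This expresses that the homogeneous map F_θ(x,y,z) = (x², y², xy + θ(z² − xy)) maps the δ-tube around the conic {z² = xy} into the 2δ-tube.) -/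
/-!
Since `Z - xy = θ(z² - xy)`, we have `Z² - XY = θ(z² - xy)(Z + xy)`, and `|Z + xy| ≤ 2M` where
`M = max(|X|, |Y|, |Z|)`, because `|xy| ≤ max(|x|², |y|²)`. It remains to see
`|θ|·|z² - xy| ≤ θ₀δm² ≤ δM` with `m = max(|x|, |y|, |z|)`: if `m` is `|x|` or `|y|` then
`m² ≤ M`, and if `m = |z|` the tube condition gives `(1 - δ)|z|² ≤ |xy| ≤ M`.
-/

theorem mul_le_max_sq {α : Type*} [CommRing α] [LinearOrder α] [IsStrictOrderedRing α]
    (a b : α) : a * b ≤ max (a ^ 2) (b ^ 2) := by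
  linarith [two_mul_le_add_sq a b, le_max_left (a ^ 2) (b ^ 2), le_max_right (a ^ 2) (b ^ 2)]

theorem mul_sq_max_le_max_sq {a b c δ θ₀ : ℝ} (hδ : 0 ≤ δ) (hθδ : θ₀ ≤ 1 - δ)
    (hc : c ^ 2 ≤ a * b + δ * max a (max b c) ^ 2) :
    θ₀ * max a (max b c) ^ 2 ≤ max (a ^ 2) (b ^ 2) := by
  have hab := mul_le_max_sq a b
  rcases max_choice a (max b c) with hm | hm <;> rw [hm] at hc ⊢
  · nlinarith [le_max_left (a ^ 2) (b ^ 2), sq_nonneg a]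
  rcases max_choice b c with hm | hm <;> rw [hm] at hc ⊢
  · nlinarith [le_max_right (a ^ 2) (b ^ 2), sq_nonneg b]
  · nlinarith [sq_nonneg c]

theorem norm_sq_sub_mul_le_of_tube {𝕜 : Type*} [NormedField 𝕜] {δ θ₀ : ℝ} (hδ : 0 ≤ δ)
    (hθδ : θ₀ ≤ 1 - δ) {θ : 𝕜} (hθ : ‖θ‖ ≤ θ₀) {x y z : 𝕜}
    (h : ‖z ^ 2 - x * y‖ ≤ δ * max ‖x‖ (max ‖y‖ ‖z‖) ^ 2) :
    ‖(x * y + θ * (z ^ 2 - x * y)) ^ 2 - x ^ 2 * y ^ 2‖ ≤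
      2 * δ * max ‖x ^ 2‖ (max ‖y ^ 2‖ ‖x * y + θ * (z ^ 2 - x * y)‖) ^ 2 := by
  set W := x * y + θ * (z ^ 2 - x * y)
  set M := max ‖x ^ 2‖ (max ‖y ^ 2‖ ‖W‖)
  have hsqM : max (‖x‖ ^ 2) (‖y‖ ^ 2) ≤ M := by
    simp only [M, norm_pow]
    exact max_le_max le_rfl (le_max_left _ _)
  have hxy : ‖x * y‖ ≤ M := norm_mul x y ▸ (mul_le_max_sq _ _).trans hsqM
  have hz : ‖z‖ ^ 2 ≤ ‖x‖ * ‖y‖ + δ * max ‖x‖ (max ‖y‖ ‖z‖) ^ 2 := by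
    rw [← norm_pow, ← norm_mul]
    linarith [norm_le_insert' (z ^ 2) (x * y)]
  have hθw : ‖θ * (z ^ 2 - x * y)‖ ≤ δ * M :=
    calc ‖θ * (z ^ 2 - x * y)‖ ≤ θ₀ * (δ * max ‖x‖ (max ‖y‖ ‖z‖) ^ 2) := by
          rw [norm_mul]; exact mul_le_mul hθ h (norm_nonneg _) ((norm_nonneg θ).trans hθ)
      _ = δ * (θ₀ * max ‖x‖ (max ‖y‖ ‖z‖) ^ 2) := by ring
      _ ≤ δ * M := by gcongr; exact (mul_sq_max_le_max_sq hδ hθδ hz).trans hsqM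
  have hWxy : ‖W + x * y‖ ≤ 2 * M := by
    linarith [norm_add_le W (x * y), le_max_right ‖y ^ 2‖ ‖W‖,
      le_max_right ‖x ^ 2‖ (max ‖y ^ 2‖ ‖W‖)]
  calc ‖W ^ 2 - x ^ 2 * y ^ 2‖ = ‖θ * (z ^ 2 - x * y)‖ * ‖W + x * y‖ := by
        rw [← norm_mul]; congr 1; simp only [W]; ring
    _ ≤ δ * M * (2 * M) := mul_le_mul hθw hWxy (norm_nonneg _) (by positivity)
    _ = 2 * δ * M ^ 2 := by ring

theorem F_theta_maps_tube_into_tube_general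
    (δ θ₀ : ℝ) (hδ : 0 ≤ δ) (hθδ : θ₀ ≤ 1 - δ)
    (θ : ℂ) (hθ : ‖θ‖ ≤ θ₀)
    (x y z : ℂ)
    (h : ‖z ^ 2 - x * y‖ ≤
      δ * (max (‖x‖) (max (‖y‖) (‖z‖))) ^ 2)
    (X Y Z : ℂ) (hX : X = x ^ 2) (hY : Y = y ^ 2) (hZ : Z = x * y + θ * (z ^ 2 - x * y)) :
    ‖Z ^ 2 - X * Y‖ ≤
      2 * δ * (max (‖X‖) (max (‖Y‖) (‖Z‖))) ^ 2 := by
  subst hX hY hZ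
  exact norm_sq_sub_mul_le_of_tube hδ hθδ hθ h

/-- The map `F_θ(x,y,z) = (x², y², xy + θ(z² − xy))` sends the `δ`-tube around the conic
`{z² = xy}` into the `2δ`-tube: if `|z² − xy| ≤ δ·max(|x|,|y|,|z|)²`, `|θ| ≤ θ₀`,
`0 ≤ δ`, `0 < θ₀` and `θ₀ ≤ 1 − δ`, then `|Z² − XY| ≤ 2δ·max(|X|,|Y|,|Z|)²` where
`X = x²`, `Y = y²`, `Z = xy + θ(z² − xy)`. -/
theorem F_theta_maps_tube_into_tube
    (δ θ₀ : ℝ) (hδ : 0 ≤ δ) (hθ₀ : 0 < θ₀) (hθδ : θ₀ ≤ 1 - δ)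
    (θ : ℂ) (hθ : ‖θ‖ ≤ θ₀)
    (x y z : ℂ)
    (h : ‖z ^ 2 - x * y‖ ≤
      δ * (max (‖x‖) (max (‖y‖) (‖z‖))) ^ 2)
    (X Y Z : ℂ) (hX : X = x ^ 2) (hY : Y = y ^ 2) (hZ : Z = x * y + θ * (z ^ 2 - x * y)) :
    ‖Z ^ 2 - X * Y‖ ≤
      2 * δ * (max (‖X‖) (max (‖Y‖) (‖Z‖))) ^ 2 :=
  F_theta_maps_tube_into_tube_general δ θ₀ hδ hθδ θ hθ x y z h X Y Z hX hY hZ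
end

section
/- Let a : Fin 3 → ℂ, let ε ≥ 0, and let i ∈ Fin 3 be an index such that |a(j)| ≤ |a(i)| for all j and a(i) ≠ 0, and assume |a(0)·a(1) − a(2)²| ≤ ε·|a(i)|². Then every x : Fin 3 → ℂ satisfying the conic equation a(i)²·(x(0)·x(1) − x(2)²) = x(i)²·(a(0)·a(1) − a(2)²) also satisfies |x(0)·x(1) − x(2)²| ≤ ε·max(|x(0)|, |x(1)|, |x(2)|)². (Hence through every point of the tube { |x₀x₁ − x₂²| ≤ ε·max(|x₀|,|x₁|,|x₂|)² } there passes a conic entirely contained in the tube, which shows the rational hull of the complement of the tube equals the complement itself.) -/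
/-! Taking norms in the conic equation gives `‖a i‖²·‖F x‖ = ‖x i‖²·‖F a‖ ≤ ε·‖a i‖²·‖x i‖²`,
where `F x = x₀x₁ − x₂²`; dividing by `‖a i‖² > 0` yields `‖F x‖ ≤ ε·‖x i‖² ≤ ε·max ‖x j‖²`. -/

theorem nonneg_of_norm_le_mul_sq {K : Type*} [NormedDivisionRing K] {c v : K} {ε : ℝ}
    (hc : c ≠ 0) (hv : ‖v‖ ≤ ε * ‖c‖ ^ 2) : 0 ≤ ε :=
  nonneg_of_mul_nonneg_left ((norm_nonneg v).trans hv) (by positivity)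

theorem norm_le_mul_sq_of_sq_mul_eq_sq_mul {K : Type*} [NormedDivisionRing K] {c y u v : K}
    {ε : ℝ} (hc : c ≠ 0) (h : c ^ 2 * u = y ^ 2 * v) (hv : ‖v‖ ≤ ε * ‖c‖ ^ 2) :
    ‖u‖ ≤ ε * ‖y‖ ^ 2 := by
  have hnorm : ‖c‖ ^ 2 * ‖u‖ = ‖y‖ ^ 2 * ‖v‖ := by
    simpa only [norm_mul, norm_pow] using congrArg norm h
  refine le_of_mul_le_mul_left ?_ (by positivity : 0 < ‖c‖ ^ 2)
  calc ‖c‖ ^ 2 * ‖u‖ = ‖y‖ ^ 2 * ‖v‖ := hnorm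
    _ ≤ ‖y‖ ^ 2 * (ε * ‖c‖ ^ 2) := by gcongr
    _ = ‖c‖ ^ 2 * (ε * ‖y‖ ^ 2) := by ring

theorem Fin.norm_le_max_three {E : Type*} [Norm E] (x : Fin 3 → E) (i : Fin 3) :
    ‖x i‖ ≤ max ‖x 0‖ (max ‖x 1‖ ‖x 2‖) := by
  fin_cases i <;> simp

theorem conic_through_point_stays_in_tube_general
    (a : Fin 3 → ℂ) (ε : ℝ) (i : Fin 3)
    (hne : a i ≠ 0)
    (ha : ‖a 0 * a 1 - (a 2) ^ 2‖ ≤ ε * (‖a i‖) ^ 2)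
    (x : Fin 3 → ℂ)
    (hx : (a i) ^ 2 * (x 0 * x 1 - (x 2) ^ 2) = (x i) ^ 2 * (a 0 * a 1 - (a 2) ^ 2)) :
    ‖x 0 * x 1 - (x 2) ^ 2‖ ≤
      ε * (max (‖x 0‖) (max (‖x 1‖) (‖x 2‖))) ^ 2 := by
  have hε : 0 ≤ ε := nonneg_of_norm_le_mul_sq hne ha
  calc ‖x 0 * x 1 - x 2 ^ 2‖ ≤ ε * ‖x i‖ ^ 2 :=
        norm_le_mul_sq_of_sq_mul_eq_sq_mul hne hx ha
    _ ≤ ε * max ‖x 0‖ (max ‖x 1‖ ‖x 2‖) ^ 2 := by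
        gcongr
        exact Fin.norm_le_max_three x i

/-- Through every point `a` of the tube `{ |x₀x₁ − x₂²| ≤ ε·max(|x₀|,|x₁|,|x₂|)² }` there
passes a conic contained in the tube: if `|a j| ≤ |a i|` for all `j`, `a i ≠ 0` and
`|a₀a₁ − a₂²| ≤ ε·|a i|²`, then every `x` satisfying the conic equation
`(a i)²·(x₀x₁ − x₂²) = (x i)²·(a₀a₁ − a₂²)` lies in the tube. -/
theorem conic_through_point_stays_in_tube
    (a : Fin 3 → ℂ) (ε : ℝ) (hε : 0 ≤ ε) (i : Fin 3)
    (hmax : ∀ j, ‖a j‖ ≤ ‖a i‖) (hne : a i ≠ 0)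
    (ha : ‖a 0 * a 1 - (a 2) ^ 2‖ ≤ ε * (‖a i‖) ^ 2)
    (x : Fin 3 → ℂ)
    (hx : (a i) ^ 2 * (x 0 * x 1 - (x 2) ^ 2) = (x i) ^ 2 * (a 0 * a 1 - (a 2) ^ 2)) :
    ‖x 0 * x 1 - (x 2) ^ 2‖ ≤
      ε * (max (‖x 0‖) (max (‖x 1‖) (‖x 2‖))) ^ 2 :=
  conic_through_point_stays_in_tube_general a ε i hne ha x hx
end

section
/- Let X be a compact metric space, let (μ_n) be a sequence of finite Borel measures on X with sup_n μ_n(X) < ∞ and μ_n(X) → 1, and let ν be a Borel probability measure on X. Suppose that every weak-* cluster value μ of the sequence (μ_n) satisfies ν ≤ μ (i.e. ν(A) ≤ μ(A) for every Borel set A). Then μ_n converges weakly to ν. -/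
open MeasureTheory Filter Topology
open scoped NNReal ENNReal

/-!
The normalized measures live in the compact metrizable space of probability measures, so it
suffices that each of their cluster points `P` equals `ν`. Such a `P` is the limit of a
subsequence, along which the masses tend to `1`, so `μs` itself converges to `P` there; hence
`ν ≤ P`, and two probability measures comparable in this way are equal.
-/

namespace MeasureTheory.FiniteMeasure

variable {X : Type*} [MeasurableSpace X] [TopologicalSpace X] [OpensMeasurableSpace X]
  {ι : Type*} {l : Filter ι} {μs : ι → FiniteMeasure X}

lemma tendsto_toFiniteMeasure_of_tendsto_normalize [Nonempty X] {P : ProbabilityMeasure X}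
    (hnorm : Tendsto (fun i ↦ (μs i).normalize) l (𝓝 P))
    (hmass : Tendsto (fun i ↦ (μs i).mass) l (𝓝 1)) :
    Tendsto μs l (𝓝 P.toFiniteMeasure) := by
  rw [← tendsto_normalize_iff_tendsto P.toFiniteMeasure_nonzero,
    ProbabilityMeasure.toFiniteMeasure_normalize_eq_self, ProbabilityMeasure.mass_toFiniteMeasure]
  exact ⟨hnorm, hmass⟩

lemma tendsto_integral_continuousMap [CompactSpace X] {μ : FiniteMeasure X}
    (h : Tendsto μs l (𝓝 μ)) (g : C(X, ℝ)) :
    Tendsto (fun i ↦ ∫ x, g x ∂(μs i : Measure X)) l (𝓝 (∫ x, g x ∂(μ : Measure X))) :=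
  tendsto_iff_forall_integral_tendsto.1 h (BoundedContinuousFunction.mkOfCompact g)

end MeasureTheory.FiniteMeasure

open FiniteMeasure in
theorem tendsto_of_forall_cluster_le_general
    {X : Type*} [MetricSpace X] [CompactSpace X] [MeasurableSpace X] [BorelSpace X]
    (μs : ℕ → FiniteMeasure X)
    (hmass : Tendsto (fun n => (μs n : Measure X) Set.univ) atTop (𝓝 1))
    (ν : Measure X) [IsProbabilityMeasure ν]
    (hcluster : ∀ μ : FiniteMeasure X,
      (∃ φ : ℕ → ℕ, StrictMono φ ∧ ∀ g : C(X, ℝ),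
        Tendsto (fun n => ∫ x, g x ∂(μs (φ n) : Measure X)) atTop
          (𝓝 (∫ x, g x ∂(μ : Measure X)))) →
      ν ≤ (μ : Measure X)) :
    ∀ g : C(X, ℝ),
      Tendsto (fun n => ∫ x, g x ∂(μs n : Measure X)) atTop (𝓝 (∫ x, g x ∂ν)) := by
  have : Nonempty X := nonempty_of_isProbabilityMeasure ν
  have hmass' : Tendsto (fun n ↦ (μs n).mass) atTop (𝓝 1) := by
    simpa [← ENNReal.tendsto_coe, ennreal_mass] using hmass
  have hnorm : Tendsto (fun n ↦ (μs n).normalize) atTop (𝓝 ⟨ν, ‹_›⟩) := by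
    refine tendsto_nhds_of_unique_mapClusterPt fun P hP ↦ ?_
    obtain ⟨φ, hφ, hφP⟩ := hP.tendsto_subseq
    have hsubseq := tendsto_toFiniteMeasure_of_tendsto_normalize hφP
      (hmass'.comp hφ.tendsto_atTop)
    have hνP : ν ≤ P := hcluster P.toFiniteMeasure
      ⟨φ, hφ, tendsto_integral_continuousMap hsubseq⟩
    exact Subtype.ext (Measure.eq_of_le_of_isProbabilityMeasure hνP).symm
  exact tendsto_integral_continuousMap (tendsto_toFiniteMeasure_of_tendsto_normalize hnorm hmass')

/-- On a compact metric space, a sequence of finite Borel measures with uniformly bounded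
masses tending to `1`, all of whose weak-* cluster values dominate a fixed Borel probability
measure `ν`, converges weakly to `ν`.  A weak-* cluster value is a measure `μ` such that along
some subsequence the integrals of every continuous function converge to those of `μ`; weak
convergence means convergence of the integrals of all continuous functions. -/
theorem tendsto_of_forall_cluster_le
    {X : Type*} [MetricSpace X] [CompactSpace X] [MeasurableSpace X] [BorelSpace X]
    (μs : ℕ → FiniteMeasure X)
    (hsup : ∃ C : ℝ≥0, ∀ n, (μs n : Measure X) Set.univ ≤ C)
    (hmass : Tendsto (fun n => (μs n : Measure X) Set.univ) atTop (𝓝 1))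
    (ν : Measure X) [IsProbabilityMeasure ν]
    (hcluster : ∀ μ : FiniteMeasure X,
      (∃ φ : ℕ → ℕ, StrictMono φ ∧ ∀ g : C(X, ℝ),
        Tendsto (fun n => ∫ x, g x ∂(μs (φ n) : Measure X)) atTop
          (𝓝 (∫ x, g x ∂(μ : Measure X)))) →
      ν ≤ (μ : Measure X)) :
    ∀ g : C(X, ℝ),
      Tendsto (fun n => ∫ x, g x ∂(μs n : Measure X)) atTop (𝓝 (∫ x, g x ∂ν)) :=
  tendsto_of_forall_cluster_le_general μs hmass ν hcluster
end
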